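/- arXiv:2509.08727 — 2 statements merged into one kernel-verified Lean document; each statement's English description precedes it below -/
import Mathlib

section
/- Let σ, σ', σm, σm' be valuations/substitutions, let e, e1 be expressions possibly equal to a distinguished symbol ⊤, and let (v, t), (v', t') be value–taint pairs with t = t'. Suppose the simulated-value relation holds: (e = ⊤ ∧ v' = v) ∨ (e ≠ ⊤ ∧ v' = σ'(e) ∧ v = σ(e)); suppose e = σm(e1) or (σ'(e) = σ(e) and σm(e1) = ⊤); suppose σm(x) ≠ ⊤ for all x in dom(σm). Then: (a) if σm'(e1) = σm(e1) = ⊤, the simulated-value relation holds for e1 under the composed substitutions σ∘σm and σ'∘σm' with pairs (v,t), (v',t'); (b) if σm'(e1) = σm(e1) + c ≠ ⊤ for a constant c, then the relation holds with the pair (v'+c, t') in place of (v', t'). -/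
/-- Arithmetic expressions over variables `V`. -/
inductive Expr (V : Type) where
  | var : V → Expr V
  | const : ℤ → Expr V
  | add : Expr V → Expr V → Expr V
  | mul : Expr V → Expr V → Expr V
  | neg : Expr V → Expr V

/-- Evaluate an expression under a valuation. -/
def Expr.eval {V : Type} (v : V → ℤ) : Expr V → ℤ
  | .var x => v x
  | .const c => c
  | .add a b => a.eval v + b.eval v
  | .mul a b => a.eval v * b.eval v
  | .neg a => - a.eval v

/-- A (partial) type substitution. -/
def Subst (V : Type) := V → Option (Expr V)

/-- Apply a substitution homomorphically, acting as the identity outside its domain. -/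
def Expr.applySubst {V : Type} (σ : Subst V) : Expr V → Expr V
  | .var x => (σ x).getD (.var x)
  | .const c => .const c
  | .add a b => .add (a.applySubst σ) (b.applySubst σ)
  | .mul a b => .mul (a.applySubst σ) (b.applySubst σ)
  | .neg a => .neg (a.applySubst σ)

/-- The valuation `σ ∘ σm` obtained by composing a valuation with a substitution. -/
def compVal {V : Type} (σ : V → ℤ) (σm : Subst V) : V → ℤ :=
  fun x => ((σm x).getD (.var x)).eval σ

/-- Dependent types: `none` plays the role of the unknown type ⊤. -/
abbrev DType (V : Type) := Option (Expr V)

/-- The simulated-value relation `(v', t') ≺_e (v, t)` under valuations `(σ', σ)`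
(the taint components are handled separately, by the hypothesis `t = t'`):
either the dependent type is ⊤ and the values coincide, or both values are
obtained by evaluating `e` under the respective valuations. -/
def simVal {V : Type} (σ σ' : V → ℤ) (d : DType V) (v v' : ℤ) : Prop :=
  (d = none ∧ v' = v) ∨ (∃ e, d = some e ∧ v' = e.eval σ' ∧ v = e.eval σ)

/-- Apply a substitution to a dependent type (σm(⊤) = ⊤). -/
def DType.applySubst {V : Type} (σm : Subst V) (d : DType V) : DType V :=
  d.map (Expr.applySubst σm)

theorem eval_applySubst {V : Type} (σ : V → ℤ) (σm : Subst V) (ex : Expr V) :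
    (Expr.applySubst σm ex).eval σ = ex.eval (compVal σ σm) := by
  induction ex with
  | var x => rfl
  | const c => rfl
  | add a b ha hb => simp [Expr.applySubst, Expr.eval, ha, hb]
  | mul a b ha hb => simp [Expr.applySubst, Expr.eval, ha, hb]
  | neg a ha => simp [Expr.applySubst, Expr.eval, ha]

theorem sim_val_substitute_general {V : Type}
    (σ σ' : V → ℤ) (σm σm' : Subst V)
    (e e1 : DType V) (v v' t t' : ℤ)
    (ht : t = t')
    -- the simulated-value relation holds for e
    (hsim : simVal σ σ' e v v')
    -- e = σm(e1), or (σ'(e) = σ(e) and σm(e1) = ⊤)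
    (h2 : DType.applySubst σm e1 = e ∨
      ((∀ ex, e = some ex → ex.eval σ' = ex.eval σ) ∧ DType.applySubst σm e1 = none)) :
    -- (a) if σm'(e1) = σm(e1) = ⊤
    ((DType.applySubst σm' e1 = none ∧ DType.applySubst σm e1 = none) →
      simVal (compVal σ σm) (compVal σ' σm') e1 v v') ∧
    -- (b) if σm'(e1) = σm(e1) + c ≠ ⊤ for a constant c
    (∀ (c : ℤ) (ea : Expr V),
      DType.applySubst σm e1 = some ea →
      DType.applySubst σm' e1 = some (.add ea (.const c)) →
      simVal (compVal σ σm) (compVal σ' σm') e1 v (v' + c)) := by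
  constructor
  · rintro ⟨h', h⟩
    have he1 : e1 = none := by
      cases e1 with
      | none => rfl
      | some ex => simp [DType.applySubst] at h
    subst he1
    left
    refine ⟨rfl, ?_⟩
    rcases h2 with h2 | ⟨heq, _⟩
    · rcases hsim with ⟨_, hv⟩ | ⟨ex, hex, _⟩
      · exact hv
      · rw [← h2] at hex; simp [DType.applySubst] at hex
    · rcases hsim with ⟨_, hv⟩ | ⟨ex, hex, hv', hv⟩
      · exact hv
      · rw [hv', hv, heq ex hex]
  · intro c ea hm hm'
    cases e1 with
    | none => simp [DType.applySubst] at hm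
    | some ex1 =>
      simp [DType.applySubst] at hm hm'
      rcases h2 with h2 | ⟨_, hnone⟩
      · rcases hsim with ⟨hnone, _⟩ | ⟨ex, hex, hv', hv⟩
        · rw [← h2] at hnone; simp [DType.applySubst] at hnone
        · rw [← h2] at hex
          simp [DType.applySubst, hm] at hex
          subst hex
          right
          refine ⟨ex1, rfl, ?_, ?_⟩
          · rw [← eval_applySubst, hm']
            simp [Expr.eval, ← eval_applySubst, hm, hv']
          · rw [← eval_applySubst, hm, hv]
      · simp [DType.applySubst] at hnone
end

section
/- Let T : Ptr → Finset(Taint) assign to each base pointer the set of taint types of memory slots it references, computed from a memory type M0, and let M1 be another memory type over the same slots such that every non-local-stack slot has the same base pointer and the same taint type in M0 and M1. Suppose the transformation strategy is defined per slot s by: ω(s) = TransPtr iff the base pointer of s is not the stack pointer sp and T(getPtr(s)) is a singleton, else ω(s) = TransOp. If local-stack slots are exactly those whose base pointer is sp, then the strategy maps computed from M0 and from M1 are equal: ω0 = ω1. -/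
/-- The set of taint types of memory slots referenced by a given base pointer. -/
def taintsOf {S P τ : Type} [Fintype S] [DecidableEq S] [DecidableEq P] [DecidableEq τ]
    (getPtr : S → P) (M : S → τ) (ptr : P) : Finset τ :=
  (Finset.univ.filter (fun s => getPtr s = ptr)).image M

/-- The transformation strategy: `true` means TransPtr, `false` means TransOp.
`ω(s) = TransPtr` iff the base pointer of `s` is not the stack pointer `sp`
and the set of taint types of slots sharing the base pointer is a singleton. -/
def strat {S P τ : Type} [Fintype S] [DecidableEq S] [DecidableEq P] [DecidableEq τ]
    (getPtr : S → P) (sp : P) (M : S → τ) (s : S) : Bool :=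
  decide (getPtr s ≠ sp) && decide ((taintsOf getPtr M (getPtr s)).card = 1)

theorem same_trans_strategy {S P τ : Type}
    [Fintype S] [DecidableEq S] [DecidableEq P] [DecidableEq τ]
    (getPtr : S → P) (sp : P) (M0 M1 : S → τ)
    -- every non-local-stack slot (i.e., base pointer ≠ sp) has the same taint
    -- type in M0 and M1 (base pointers are shared by construction)
    (h : ∀ s : S, getPtr s ≠ sp → M0 s = M1 s) :
    strat getPtr sp M0 = strat getPtr sp M1 := by
  funext s
  unfold strat
  by_cases hs : getPtr s = sp
  · simp [hs]
  · have : taintsOf getPtr M0 (getPtr s) = taintsOf getPtr M1 (getPtr s) := by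
      unfold taintsOf
      apply Finset.image_congr
      intro x hx
      simp only [Finset.coe_filter, Set.mem_setOf_eq] at hx
      exact h x (hx.2 ▸ hs)
    rw [this]
end
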